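/- Let 0 < ε₀ ≤ 1 and fix 1 ≤ j ≤ d. There exist constants 0 < c ≤ C < ∞, depending only on ε₀, d, n, the d_p, the m_p, and the ω_l, such that for every nonzero ξ ∈ ℝ^d with all components nonnegative and ξ_j ≥ ε₀|ξ|, the point a = x(ξ) ∈ ∂D satisfies: (i) a_j ≥ c; (ii) a_l ≤ C · (ξ_l/|ξ|)^{1/(m_{j,l} ω_l − 1)} for every l ≠ j; and (iii) if moreover p(l) = p(j) and ξ_l > 0 then c · (ξ_l/|ξ|)^{1/(ω_l − 1)} ≤ a_l ≤ C · (ξ_l/|ξ|)^{1/(ω_l − 1)}. -/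

import Mathlib

open MeasureTheory Finset Real Filter Pointwise

noncomputable section

/-- The block of (0-indexed) coordinates `l` with `dp p ≤ l < dp (p+1)`. -/
def block (dd : ℕ) (dp : ℕ → ℕ) (p : ℕ) : Finset (Fin dd) :=
  Finset.univ.filter fun l => dp p ≤ (l : ℕ) ∧ (l : ℕ) < dp (p + 1)

/-- The defining function of the domain `D`. -/
def Ffun (dd nn : ℕ) (dp m : ℕ → ℕ) (ω : Fin dd → ℕ)
    (x : EuclideanSpace ℝ (Fin dd)) : ℝ :=
  ∑ p ∈ Finset.range nn, (∑ l ∈ block dd dp p, x l ^ ω l) ^ m p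

/-- The domain `D`. -/
def Dset (dd nn : ℕ) (dp m : ℕ → ℕ) (ω : Fin dd → ℕ) :
    Set (EuclideanSpace ℝ (Fin dd)) :=
  {x | Ffun dd nn dp m ω x ≤ 1}

/-- The exponents `m_{j,l}`. -/
def mjl (dd : ℕ) (m : ℕ → ℕ) (pIdx : Fin dd → ℕ) (j l : Fin dd) : ℕ :=
  if pIdx j = pIdx l then 1 else m (pIdx l)

/-- The Fourier transform of the indicator function of a set. -/
def ftInd (dd : ℕ) (D : Set (EuclideanSpace ℝ (Fin dd)))
    (ξ : EuclideanSpace ℝ (Fin dd)) : ℂ :=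
  ∫ x in D, Complex.exp (-2 * Real.pi * Complex.I * ((inner ℝ x ξ : ℝ) : ℂ))

/-- The Fourier transform of a (real-valued) function. -/
def ftFun (dd : ℕ) (f : EuclideanSpace ℝ (Fin dd) → ℝ)
    (ξ : EuclideanSpace ℝ (Fin dd)) : ℂ :=
  ∫ x, (f x : ℂ) * Complex.exp (-2 * Real.pi * Complex.I * ((inner ℝ x ξ : ℝ) : ℂ))

/-- The number of lattice points in the dilate `t • D`. -/
def latCount (dd : ℕ) (D : Set (EuclideanSpace ℝ (Fin dd))) (t : ℝ) : ℕ :=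
  Set.ncard {k : Fin dd → ℤ | (WithLp.toLp 2 (fun i => (k i : ℝ)) : EuclideanSpace ℝ (Fin dd)) ∈ t • D}

/-!
On `∂D` we have `F(a) = 1`, so every block sum `S_p(a) = ∑_{l ∈ p} a_l^ω_l` and every `|a_l|` is
at most `1`, and the normal condition says `∂_l F(a) = |∇F(a)| ξ_l / |ξ|`, where
`∂_l F(a) = m_p S_p(a)^(m_p - 1) ω_l a_l^(ω_l - 1)` for `p = p(l)`. The gradient has norm at most
`√d · max m · max ω`, and at least `1/√d`: Euler's identity for the weighted homogeneous block sums
gives `1 = F(a) ≤ ⟨a, ∇F(a)⟩ ≤ √d |∇F(a)|`. Hence `∂_l F(a)` is comparable to `ξ_l / |ξ|`.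

The coefficient `m_p S_p^(m_p - 1) ω_l` is at most `max m · max ω`, so `ξ_l / |ξ| ≲ a_l^(ω_l - 1)`;
with `ξ_j ≥ ε₀ |ξ|` this gives (i), and it gives the lower half of (iii). For (ii) the coefficient
is bounded below by a power of `c ≤ a_j` when `l` lies in the block of `j` (as `S_p ≥ a_j^ω_j`),
and by `(a_l^ω_l)^(m_p - 1)` otherwise, so that `a_l^(m_{j,l} ω_l - 1) ≲ ξ_l / |ξ|`.
-/

lemma two_le_of_even_of_pos {n : ℕ} (h : Even n) (h0 : 0 < n) : 2 ≤ n := by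
  obtain ⟨k, rfl⟩ := h
  omega

lemma EuclideanSpace.norm_le_sqrt_card_mul {ι : Type*} [Fintype ι] (x : EuclideanSpace ℝ ι)
    {b : ℝ} (hb0 : 0 ≤ b) (hb : ∀ i, |x i| ≤ b) : ‖x‖ ≤ √(Fintype.card ι) * b := by
  rw [EuclideanSpace.norm_eq, ← Real.sqrt_sq hb0, ← Real.sqrt_mul (Nat.cast_nonneg _)]
  refine Real.sqrt_le_sqrt ?_
  calc ∑ i, ‖x i‖ ^ 2 ≤ ∑ _i : ι, b ^ 2 :=
        Finset.sum_le_sum fun i _ => pow_le_pow_left₀ (norm_nonneg _) (hb i) 2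
    _ = Fintype.card ι * b ^ 2 := by simp

lemma EuclideanSpace.apply_eq_norm_mul_of_inv_norm_smul_eq {ι : Type*} [Fintype ι]
    {u v : EuclideanSpace ℝ ι} (h : ‖u‖⁻¹ • u = ‖v‖⁻¹ • v) (i : ι) :
    u i = ‖u‖ * (v i / ‖v‖) := by
  rcases eq_or_ne u 0 with rfl | hu
  · simp
  have := congrArg (· i) ((inv_smul_eq_iff₀ (norm_ne_zero_iff.2 hu)).1 h)
  simpa [div_eq_inv_mul] using this

lemma le_mul_rpow_inv_of_pow_le {x r K : ℝ} {e : ℕ} (hx : 0 ≤ x) (hr : 0 ≤ r) (hK : 1 ≤ K)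
    (he : e ≠ 0) (h : x ^ e ≤ K * r) : x ≤ K * r ^ (e⁻¹ : ℝ) := by
  have he' : (e⁻¹ : ℝ) ≤ 1 :=
    inv_le_one_of_one_le₀ (by exact_mod_cast Nat.one_le_iff_ne_zero.2 he)
  calc x = (x ^ e) ^ (e⁻¹ : ℝ) := (Real.pow_rpow_inv_natCast hx he).symm
    _ ≤ (K * r) ^ (e⁻¹ : ℝ) := by gcongr
    _ = K ^ (e⁻¹ : ℝ) * r ^ (e⁻¹ : ℝ) := Real.mul_rpow (by linarith) hr
    _ ≤ K * r ^ (e⁻¹ : ℝ) := by gcongr; exact Real.rpow_le_self_of_one_le hK he'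

lemma mul_rpow_inv_le_of_mul_le_pow {x r c : ℝ} {e : ℕ} (hx : 0 ≤ x) (hr : 0 ≤ r) (hc0 : 0 ≤ c)
    (hc1 : c ≤ 1) (he : e ≠ 0) (h : c * r ≤ x ^ e) : c * r ^ (e⁻¹ : ℝ) ≤ x := by
  have he' : (e⁻¹ : ℝ) ≤ 1 :=
    inv_le_one_of_one_le₀ (by exact_mod_cast Nat.one_le_iff_ne_zero.2 he)
  calc c * r ^ (e⁻¹ : ℝ) ≤ c ^ (e⁻¹ : ℝ) * r ^ (e⁻¹ : ℝ) := by
        gcongr; exact Real.self_le_rpow_of_le_one hc0 hc1 he'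
    _ = (c * r) ^ (e⁻¹ : ℝ) := (Real.mul_rpow hc0 hr).symm
    _ ≤ (x ^ e) ^ (e⁻¹ : ℝ) := by gcongr
    _ = x := Real.pow_rpow_inv_natCast hx he

def IsBlockIndex (dd nn : ℕ) (dp : ℕ → ℕ) (pIdx : Fin dd → ℕ) : Prop :=
  ∀ i : Fin dd, pIdx i < nn ∧ dp (pIdx i) ≤ (i : ℕ) ∧ (i : ℕ) < dp (pIdx i + 1)

def blockSum (dd : ℕ) (dp : ℕ → ℕ) (ω : Fin dd → ℕ) (p : ℕ) (x : EuclideanSpace ℝ (Fin dd)) :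
    ℝ :=
  ∑ l ∈ block dd dp p, x l ^ ω l

def gradCoeff (dd : ℕ) (dp m : ℕ → ℕ) (ω : Fin dd → ℕ) (pIdx : Fin dd → ℕ)
    (x : EuclideanSpace ℝ (Fin dd)) (i : Fin dd) : ℝ :=
  m (pIdx i) * blockSum dd dp ω (pIdx i) x ^ (m (pIdx i) - 1) * ω i

def gradFfun (dd : ℕ) (dp m : ℕ → ℕ) (ω : Fin dd → ℕ) (pIdx : Fin dd → ℕ)
    (x : EuclideanSpace ℝ (Fin dd)) : EuclideanSpace ℝ (Fin dd) :=
  WithLp.toLp 2 fun i => gradCoeff dd dp m ω pIdx x i * x i ^ (ω i - 1)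

section BlockDomain

variable {dd nn : ℕ} {dp m : ℕ → ℕ} {ω : Fin dd → ℕ} {pIdx : Fin dd → ℕ}
  {x : EuclideanSpace ℝ (Fin dd)} {r : Fin dd → ℝ} {M W : ℕ}

lemma mem_block_iff (hmono : ∀ p < nn, dp p < dp (p + 1)) (hp : IsBlockIndex dd nn dp pIdx)
    {p : ℕ} (hpn : p < nn) (l : Fin dd) :
    l ∈ block dd dp p ↔ pIdx l = p := by
  have hdp : StrictMonoOn dp (Set.Iic nn) := strictMonoOn_Iic_of_lt_succ hmono
  simp only [block, Finset.mem_filter, Finset.mem_univ, true_and]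
  refine ⟨fun ⟨hlo, hhi⟩ => ?_, fun h => h ▸ (hp l).2⟩
  obtain ⟨hln, hllo, hlhi⟩ := hp l
  by_contra hne
  rcases Nat.lt_or_gt_of_ne hne with h | h
  · have : dp (pIdx l + 1) ≤ dp p :=
      hdp.monotoneOn (Set.mem_Iic.2 hln) (Set.mem_Iic.2 hpn.le) h
    omega
  · have : dp (p + 1) ≤ dp (pIdx l) :=
      hdp.monotoneOn (Set.mem_Iic.2 hpn) (Set.mem_Iic.2 hln.le) h
    omega

lemma sum_block_sum (hmono : ∀ p < nn, dp p < dp (p + 1)) (hp : IsBlockIndex dd nn dp pIdx)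
    (f : ℕ → Fin dd → ℝ) :
    ∑ p ∈ Finset.range nn, ∑ l ∈ block dd dp p, f p l = ∑ l, f (pIdx l) l := by
  rw [← Finset.sum_fiberwise_of_maps_to (g := pIdx) (t := Finset.range nn)
    (fun l _ => Finset.mem_range.2 (hp l).1)]
  refine Finset.sum_congr rfl fun p hpn => Finset.sum_congr ?_ fun l hl => ?_
  · ext l
    simp [mem_block_iff hmono hp (Finset.mem_range.1 hpn)]
  · rw [(Finset.mem_filter.1 hl).2]

lemma mem_block_self (hp : IsBlockIndex dd nn dp pIdx) (l : Fin dd) :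
    l ∈ block dd dp (pIdx l) := by
  simp only [block, Finset.mem_filter, Finset.mem_univ, true_and]
  exact (hp l).2

lemma gradFfun_apply (x : EuclideanSpace ℝ (Fin dd)) (i : Fin dd) :
    gradFfun dd dp m ω pIdx x i = gradCoeff dd dp m ω pIdx x i * x i ^ (ω i - 1) :=
  rfl

lemma continuous_Ffun : Continuous (Ffun dd nn dp m ω) := by
  unfold Ffun
  fun_prop

lemma hasGradientAt_Ffun (hmono : ∀ p < nn, dp p < dp (p + 1)) (hp : IsBlockIndex dd nn dp pIdx)
    (x : EuclideanSpace ℝ (Fin dd)) :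
    HasGradientAt (Ffun dd nn dp m ω) (gradFfun dd dp m ω pIdx x) x := by
  let proj (l : Fin dd) : EuclideanSpace ℝ (Fin dd) →L[ℝ] ℝ := EuclideanSpace.proj l
  have hS (p : ℕ) : HasFDerivAt (blockSum dd dp ω p)
      (∑ l ∈ block dd dp p, ((ω l : ℝ) * x l ^ (ω l - 1)) • proj l) x :=
    HasFDerivAt.fun_sum fun l _ =>
      (hasDerivAt_pow (ω l) (x l)).comp_hasFDerivAt x (proj l).hasFDerivAt
  have hF : HasFDerivAt (Ffun dd nn dp m ω)
      (∑ p ∈ Finset.range nn, ((m p : ℝ) * blockSum dd dp ω p x ^ (m p - 1)) •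
        ∑ l ∈ block dd dp p, ((ω l : ℝ) * x l ^ (ω l - 1)) • proj l) x :=
    HasFDerivAt.fun_sum fun p _ => (hasDerivAt_pow (m p) _).comp_hasFDerivAt x (hS p)
  rw [hasGradientAt_iff_hasFDerivAt]
  refine hF.congr_fderiv (ContinuousLinearMap.ext fun v => ?_)
  simp only [_root_.sum_apply, smul_apply, smul_eq_mul,
    Finset.mul_sum, InnerProductSpace.toDual_apply_apply, PiLp.inner_apply, RCLike.inner_apply,
    conj_trivial, gradFfun_apply, gradCoeff, proj, PiLp.proj_apply]
  rw [sum_block_sum hmono hp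
    (fun p l => m p * blockSum dd dp ω p x ^ (m p - 1) * (ω l * x l ^ (ω l - 1) * v l))]
  exact Finset.sum_congr rfl fun i _ => by ring

lemma Ffun_eq_one_of_mem_frontier (hx : x ∈ frontier (Dset dd nn dp m ω)) :
    Ffun dd nn dp m ω x = 1 :=
  frontier_le_subset_eq continuous_Ffun continuous_const hx

lemma blockSum_nonneg (hω : ∀ l, Even (ω l)) (p : ℕ) : 0 ≤ blockSum dd dp ω p x :=
  Finset.sum_nonneg fun l _ => (hω l).pow_nonneg _

lemma pow_le_blockSum (hω : ∀ l, Even (ω l)) {p : ℕ} {l : Fin dd} (hl : l ∈ block dd dp p) :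
    x l ^ ω l ≤ blockSum dd dp ω p x :=
  Finset.single_le_sum (f := fun k => x k ^ ω k) (fun k _ => (hω k).pow_nonneg _) hl

lemma blockSum_le_one (hm : ∀ p < nn, 1 ≤ m p) (hω : ∀ l, Even (ω l))
    (hx : Ffun dd nn dp m ω x ≤ 1) {p : ℕ} (hpn : p < nn) : blockSum dd dp ω p x ≤ 1 := by
  have hpow : blockSum dd dp ω p x ^ m p ≤ 1 :=
    (Finset.single_le_sum (f := fun q => blockSum dd dp ω q x ^ m q)
      (fun q _ => pow_nonneg (blockSum_nonneg hω q) _) (Finset.mem_range.2 hpn)).trans hx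
  exact (pow_le_one_iff_of_nonneg (blockSum_nonneg hω p) (by have := hm p hpn; omega)).1 hpow

lemma abs_le_one_of_Ffun_le_one (hp : IsBlockIndex dd nn dp pIdx) (hm : ∀ p < nn, 1 ≤ m p)
    (hω : ∀ l, Even (ω l) ∧ 0 < ω l) (hx : Ffun dd nn dp m ω x ≤ 1) (l : Fin dd) :
    |x l| ≤ 1 := by
  have hpow : |x l| ^ ω l ≤ 1 := by
    rw [(hω l).1.pow_abs]
    exact (pow_le_blockSum (fun k => (hω k).1) (mem_block_self hp l)).trans
      (blockSum_le_one hm (fun k => (hω k).1) hx (hp l).1)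
  exact (pow_le_one_iff_of_nonneg (abs_nonneg _) (hω l).2.ne').1 hpow

lemma gradCoeff_nonneg (hω : ∀ l, Even (ω l)) (i : Fin dd) :
    0 ≤ gradCoeff dd dp m ω pIdx x i := by
  unfold gradCoeff
  have := blockSum_nonneg (dp := dp) (x := x) hω (pIdx i)
  positivity

lemma gradCoeff_le (hp : IsBlockIndex dd nn dp pIdx) (hm : ∀ p < nn, 1 ≤ m p)
    (hω : ∀ l, Even (ω l)) (hx : Ffun dd nn dp m ω x ≤ 1) (hM : ∀ p < nn, m p ≤ M)
    (hW : ∀ l, ω l ≤ W) (i : Fin dd) : gradCoeff dd dp m ω pIdx x i ≤ M * W := by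
  have hS := blockSum_le_one hm hω hx (hp i).1
  have hS0 := blockSum_nonneg (dp := dp) (x := x) hω (pIdx i)
  have hmM : (m (pIdx i) : ℝ) ≤ M := by exact_mod_cast hM _ (hp i).1
  have hωW : (ω i : ℝ) ≤ W := by exact_mod_cast hW i
  calc gradCoeff dd dp m ω pIdx x i ≤ M * 1 * W := by
        unfold gradCoeff
        gcongr
        exact pow_le_one₀ hS0 hS
    _ = M * W := by ring

lemma blockSum_pow_le_gradCoeff (hω : ∀ l, Even (ω l)) {i : Fin dd} (hm : 1 ≤ m (pIdx i))
    (hωi : 1 ≤ ω i) :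
    blockSum dd dp ω (pIdx i) x ^ (m (pIdx i) - 1) ≤ gradCoeff dd dp m ω pIdx x i := by
  have hS0 := blockSum_nonneg (dp := dp) (x := x) hω (pIdx i)
  have hm' : (1 : ℝ) ≤ m (pIdx i) := by exact_mod_cast hm
  have hω' : (1 : ℝ) ≤ ω i := by exact_mod_cast hωi
  calc blockSum dd dp ω (pIdx i) x ^ (m (pIdx i) - 1)
      = 1 * blockSum dd dp ω (pIdx i) x ^ (m (pIdx i) - 1) * 1 := by ring
    _ ≤ gradCoeff dd dp m ω pIdx x i := by unfold gradCoeff; gcongr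

lemma pos_of_gradFfun_pos (hω : ∀ l, Even (ω l)) {i : Fin dd} (hωi : 0 < ω i)
    (h : 0 < gradFfun dd dp m ω pIdx x i) : 0 < x i := by
  have hodd : Odd (ω i - 1) := Nat.Even.sub_odd hωi (hω i) odd_one
  rw [gradFfun_apply] at h
  exact hodd.pow_pos_iff.1 (pos_of_mul_pos_right h (gradCoeff_nonneg hω i))

lemma gradFfun_le_mul_pow (hp : IsBlockIndex dd nn dp pIdx) (hm : ∀ p < nn, 1 ≤ m p)
    (hω : ∀ l, Even (ω l)) (hx : Ffun dd nn dp m ω x ≤ 1) (hM : ∀ p < nn, m p ≤ M)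
    (hW : ∀ l, ω l ≤ W) {l : Fin dd} (hxl : 0 ≤ x l) :
    gradFfun dd dp m ω pIdx x l ≤ M * W * x l ^ (ω l - 1) :=
  mul_le_mul_of_nonneg_right (gradCoeff_le hp hm hω hx hM hW l) (pow_nonneg hxl _)

lemma blockSum_pow_mul_le_gradFfun (hω : ∀ l, Even (ω l)) {l : Fin dd} (hm : 1 ≤ m (pIdx l))
    (hωl : 1 ≤ ω l) (hxl : 0 ≤ x l) :
    blockSum dd dp ω (pIdx l) x ^ (m (pIdx l) - 1) * x l ^ (ω l - 1) ≤
      gradFfun dd dp m ω pIdx x l :=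
  mul_le_mul_of_nonneg_right (blockSum_pow_le_gradCoeff hω hm hωl) (pow_nonneg hxl _)

lemma pow_le_gradFfun (hp : IsBlockIndex dd nn dp pIdx) (hω : ∀ l, Even (ω l)) {l : Fin dd}
    (hm : 1 ≤ m (pIdx l)) (hωl : 1 ≤ ω l) (hxl : 0 ≤ x l) :
    x l ^ (m (pIdx l) * ω l - 1) ≤ gradFfun dd dp m ω pIdx x l := by
  have hexp : m (pIdx l) * ω l - 1 = ω l * (m (pIdx l) - 1) + (ω l - 1) := by
    obtain ⟨k, hk⟩ : ∃ k, m (pIdx l) = k + 1 := ⟨_, (Nat.sub_add_cancel hm).symm⟩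
    rw [hk, Nat.add_sub_cancel, Nat.add_mul, one_mul, Nat.mul_comm (ω l) k]
    generalize k * ω l = t
    omega
  calc x l ^ (m (pIdx l) * ω l - 1) = (x l ^ ω l) ^ (m (pIdx l) - 1) * x l ^ (ω l - 1) := by
        rw [hexp, pow_add, pow_mul]
    _ ≤ blockSum dd dp ω (pIdx l) x ^ (m (pIdx l) - 1) * x l ^ (ω l - 1) := by
        gcongr
        exact pow_le_blockSum hω (mem_block_self hp l)
    _ ≤ gradFfun dd dp m ω pIdx x l := blockSum_pow_mul_le_gradFfun hω hm hωl hxl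

lemma mul_pow_le_gradFfun (hp : IsBlockIndex dd nn dp pIdx) (hm : ∀ p < nn, 1 ≤ m p)
    (hω : ∀ l, Even (ω l) ∧ 0 < ω l) (hM : ∀ p < nn, m p ≤ M) (hW : ∀ l, ω l ≤ W)
    {c : ℝ} (hc0 : 0 ≤ c) (hc1 : c ≤ 1) {j l : Fin dd} (hcj : c ≤ x j) (hxl : 0 ≤ x l) :
    c ^ (W * M) * x l ^ (mjl dd m pIdx j l * ω l - 1) ≤ gradFfun dd dp m ω pIdx x l := by
  have hωe : ∀ k, Even (ω k) := fun k => (hω k).1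
  have hml := hm _ (hp l).1
  unfold mjl
  split_ifs with hjl
  · rw [one_mul]
    refine le_trans ?_ (blockSum_pow_mul_le_gradFfun hωe hml (hω l).2 hxl)
    gcongr
    calc c ^ (W * M) ≤ c ^ (ω j * (m (pIdx l) - 1)) :=
          pow_le_pow_of_le_one hc0 hc1
            (Nat.mul_le_mul (hW j) ((Nat.sub_le _ 1).trans (hM _ (hp l).1)))
      _ = (c ^ ω j) ^ (m (pIdx l) - 1) := pow_mul _ _ _
      _ ≤ (x j ^ ω j) ^ (m (pIdx l) - 1) := by gcongr
      _ ≤ blockSum dd dp ω (pIdx l) x ^ (m (pIdx l) - 1) := by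
          gcongr
          · exact (hωe j).pow_nonneg _
          · exact hjl ▸ pow_le_blockSum hωe (mem_block_self hp j)
  · calc c ^ (W * M) * x l ^ (m (pIdx l) * ω l - 1) ≤ 1 * x l ^ (m (pIdx l) * ω l - 1) := by
          gcongr
          exact pow_le_one₀ hc0 hc1
      _ ≤ gradFfun dd dp m ω pIdx x l := by
          rw [one_mul]
          exact pow_le_gradFfun hp hωe hml (hω l).2 hxl

lemma norm_gradFfun_le (hp : IsBlockIndex dd nn dp pIdx) (hm : ∀ p < nn, 1 ≤ m p)
    (hω : ∀ l, Even (ω l) ∧ 0 < ω l) (hx : Ffun dd nn dp m ω x ≤ 1)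
    (hM : ∀ p < nn, m p ≤ M) (hW : ∀ l, ω l ≤ W) :
    ‖gradFfun dd dp m ω pIdx x‖ ≤ √dd * (M * W) := by
  simpa using EuclideanSpace.norm_le_sqrt_card_mul (gradFfun dd dp m ω pIdx x)
    (b := M * W) (by positivity) fun i => by
    rw [gradFfun_apply, abs_mul, abs_of_nonneg (gradCoeff_nonneg (fun l => (hω l).1) i),
      abs_pow, ← mul_one ((M : ℝ) * W)]
    exact mul_le_mul (gradCoeff_le hp hm (fun l => (hω l).1) hx hM hW i)
      (pow_le_one₀ (abs_nonneg _) (abs_le_one_of_Ffun_le_one hp hm hω hx i))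
      (by positivity) (by positivity)

lemma Ffun_le_inner_gradFfun (hmono : ∀ p < nn, dp p < dp (p + 1))
    (hp : IsBlockIndex dd nn dp pIdx) (hm : ∀ p < nn, 1 ≤ m p)
    (hω : ∀ l, Even (ω l) ∧ 0 < ω l) (x : EuclideanSpace ℝ (Fin dd)) :
    Ffun dd nn dp m ω x ≤ inner ℝ x (gradFfun dd dp m ω pIdx x) := by
  have hωe : ∀ l, Even (ω l) := fun l => (hω l).1
  calc Ffun dd nn dp m ω x
      = ∑ p ∈ Finset.range nn, blockSum dd dp ω p x ^ (m p - 1) * blockSum dd dp ω p x := by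
        refine Finset.sum_congr rfl fun p hpn => (pow_sub_one_mul ?_ _).symm
        have := hm p (Finset.mem_range.1 hpn)
        omega
    _ = ∑ l, blockSum dd dp ω (pIdx l) x ^ (m (pIdx l) - 1) * x l ^ ω l := by
        simp only [blockSum, Finset.mul_sum]
        exact sum_block_sum hmono hp _
    _ ≤ ∑ l, gradFfun dd dp m ω pIdx x l * x l := by
        refine Finset.sum_le_sum fun l _ => ?_
        rw [gradFfun_apply, mul_assoc, pow_sub_one_mul (hω l).2.ne']
        exact mul_le_mul_of_nonneg_right
          (blockSum_pow_le_gradCoeff hωe (hm _ (hp l).1) (hω l).2) ((hωe l).pow_nonneg _)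
    _ = inner ℝ x (gradFfun dd dp m ω pIdx x) := by
        simp [PiLp.inner_apply]

lemma inv_sqrt_le_norm_gradFfun (hmono : ∀ p < nn, dp p < dp (p + 1))
    (hp : IsBlockIndex dd nn dp pIdx) (hm : ∀ p < nn, 1 ≤ m p)
    (hω : ∀ l, Even (ω l) ∧ 0 < ω l) (hx : Ffun dd nn dp m ω x = 1) :
    (√dd)⁻¹ ≤ ‖gradFfun dd dp m ω pIdx x‖ := by
  have hxn : ‖x‖ ≤ √dd := by
    simpa using EuclideanSpace.norm_le_sqrt_card_mul x zero_le_one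
      (abs_le_one_of_Ffun_le_one hp hm hω hx.le)
  have h1 : 1 ≤ √dd * ‖gradFfun dd dp m ω pIdx x‖ :=
    calc (1 : ℝ) = Ffun dd nn dp m ω x := hx.symm
      _ ≤ inner ℝ x (gradFfun dd dp m ω pIdx x) := Ffun_le_inner_gradFfun hmono hp hm hω x
      _ ≤ ‖x‖ * ‖gradFfun dd dp m ω pIdx x‖ := real_inner_le_norm _ _
      _ ≤ √dd * ‖gradFfun dd dp m ω pIdx x‖ := by gcongr
  rcases (Real.sqrt_nonneg (dd : ℝ)).eq_or_lt with h0 | hpos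
  · simp [← h0]
  · exact (inv_le_iff_one_le_mul₀' hpos).2 h1

lemma one_le_sqrt_mul (hp : IsBlockIndex dd nn dp pIdx) (hm : ∀ p < nn, 1 ≤ m p)
    (hω : ∀ l, Even (ω l) ∧ 0 < ω l) (hM : ∀ p < nn, m p ≤ M) (hW : ∀ l, ω l ≤ W)
    (l : Fin dd) : 1 ≤ √dd * (M * W) := by
  have hd : (1 : ℝ) ≤ √dd := Real.one_le_sqrt.2 (by exact_mod_cast l.pos)
  have hM1 : (1 : ℝ) ≤ M := by exact_mod_cast (hm _ (hp l).1).trans (hM _ (hp l).1)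
  have hW1 : (1 : ℝ) ≤ W := by exact_mod_cast (hω l).2.trans_le (hW l)
  calc (1 : ℝ) = 1 * (1 * 1) := by ring
    _ ≤ √dd * (M * W) := by gcongr

lemma pos_and_le_mul_pow_of_normal (hmono : ∀ p < nn, dp p < dp (p + 1))
    (hp : IsBlockIndex dd nn dp pIdx) (hm : ∀ p < nn, 1 ≤ m p)
    (hω : ∀ l, Even (ω l) ∧ 0 < ω l) (hM : ∀ p < nn, m p ≤ M) (hW : ∀ l, ω l ≤ W)
    (hx : Ffun dd nn dp m ω x = 1)
    (hg : ∀ i, gradFfun dd dp m ω pIdx x i = ‖gradFfun dd dp m ω pIdx x‖ * r i)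
    {l : Fin dd} (hrl : 0 < r l) : 0 < x l ∧ r l ≤ √dd * (M * W) * x l ^ (ω l - 1) := by
  have hd : 0 < √dd := Real.sqrt_pos.2 (by exact_mod_cast l.pos)
  have hgl : (√dd)⁻¹ * r l ≤ gradFfun dd dp m ω pIdx x l := by
    rw [hg l]
    gcongr
    exact inv_sqrt_le_norm_gradFfun hmono hp hm hω hx
  have hxl : 0 < x l :=
    pos_of_gradFfun_pos (fun k => (hω k).1) (hω l).2
      ((by positivity : 0 < (√dd)⁻¹ * r l).trans_le hgl)
  refine ⟨hxl, ?_⟩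
  calc r l = √dd * ((√dd)⁻¹ * r l) := by field_simp
    _ ≤ √dd * (M * W * x l ^ (ω l - 1)) := mul_le_mul_of_nonneg_left
        (hgl.trans (gradFfun_le_mul_pow hp hm (fun k => (hω k).1) hx.le hM hW hxl.le)) hd.le
    _ = √dd * (M * W) * x l ^ (ω l - 1) := by ring

lemma le_coord_of_normal (hmono : ∀ p < nn, dp p < dp (p + 1))
    (hp : IsBlockIndex dd nn dp pIdx) (hm : ∀ p < nn, 1 ≤ m p)
    (hω : ∀ l, Even (ω l) ∧ 0 < ω l) (hM : ∀ p < nn, m p ≤ M) (hW : ∀ l, ω l ≤ W)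
    (hx : Ffun dd nn dp m ω x = 1)
    (hg : ∀ i, gradFfun dd dp m ω pIdx x i = ‖gradFfun dd dp m ω pIdx x‖ * r i)
    {c : ℝ} (hc0 : 0 < c) {j : Fin dd} (hcj : c * (√dd * (M * W)) ≤ r j) : c ≤ x j := by
  have hK := one_le_sqrt_mul hp hm hω hM hW j
  obtain ⟨hxj, hrj⟩ := pos_and_le_mul_pow_of_normal hmono hp hm hω hM hW hx hg
    ((mul_pos hc0 (zero_lt_one.trans_le hK)).trans_le hcj)
  have hxj1 : x j ≤ 1 := (le_abs_self _).trans (abs_le_one_of_Ffun_le_one hp hm hω hx.le j)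
  have hpow : x j ^ (ω j - 1) ≤ x j :=
    pow_le_of_le_one hxj.le hxj1 (by have := two_le_of_even_of_pos (hω j).1 (hω j).2; omega)
  refine le_of_mul_le_mul_right ?_ (zero_lt_one.trans_le hK)
  calc c * (√dd * (M * W)) ≤ √dd * (M * W) * x j ^ (ω j - 1) := hcj.trans hrj
    _ ≤ x j * (√dd * (M * W)) := by rw [mul_comm (x j)]; gcongr

lemma mul_rpow_le_coord_of_normal (hmono : ∀ p < nn, dp p < dp (p + 1))
    (hp : IsBlockIndex dd nn dp pIdx) (hm : ∀ p < nn, 1 ≤ m p)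
    (hω : ∀ l, Even (ω l) ∧ 0 < ω l) (hM : ∀ p < nn, m p ≤ M) (hW : ∀ l, ω l ≤ W)
    (hx : Ffun dd nn dp m ω x = 1)
    (hg : ∀ i, gradFfun dd dp m ω pIdx x i = ‖gradFfun dd dp m ω pIdx x‖ * r i)
    {c : ℝ} (hc0 : 0 ≤ c) (hc : c * (√dd * (M * W)) ≤ 1) {l : Fin dd} (hrl : 0 < r l) :
    c * r l ^ ((ω l : ℝ) - 1)⁻¹ ≤ x l := by
  have hK := one_le_sqrt_mul hp hm hω hM hW l
  obtain ⟨hxl, hrl'⟩ := pos_and_le_mul_pow_of_normal hmono hp hm hω hM hW hx hg hrl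
  have hω2 : 2 ≤ ω l := two_le_of_even_of_pos (hω l).1 (hω l).2
  have hcast : (ω l : ℝ) - 1 = (ω l - 1 : ℕ) := by rw [Nat.cast_sub (by omega), Nat.cast_one]
  rw [hcast]
  refine mul_rpow_inv_le_of_mul_le_pow hxl.le hrl.le hc0
    ((le_mul_of_one_le_right hc0 hK).trans hc) (by omega) ?_
  refine le_of_mul_le_mul_left ?_ (zero_lt_one.trans_le hK)
  calc √dd * (M * W) * (c * r l) = c * (√dd * (M * W)) * r l := by ring
    _ ≤ 1 * r l := by gcongr
    _ ≤ √dd * (M * W) * x l ^ (ω l - 1) := by rw [one_mul]; exact hrl'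

lemma coord_le_of_normal (hp : IsBlockIndex dd nn dp pIdx) (hm : ∀ p < nn, 1 ≤ m p)
    (hω : ∀ l, Even (ω l) ∧ 0 < ω l) (hM : ∀ p < nn, m p ≤ M) (hW : ∀ l, ω l ≤ W)
    (hx : Ffun dd nn dp m ω x = 1)
    (hg : ∀ i, gradFfun dd dp m ω pIdx x i = ‖gradFfun dd dp m ω pIdx x‖ * r i)
    (hr : ∀ i, 0 ≤ r i) {c C : ℝ} (hc0 : 0 < c) (hc1 : c ≤ 1) {j : Fin dd} (hcj : c ≤ x j)
    (hC : √dd * (M * W) ≤ c ^ (W * M) * C) (hC1 : 1 ≤ C) (l : Fin dd) :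
    x l ≤ C * r l ^ ((mjl dd m pIdx j l : ℝ) * ω l - 1)⁻¹ := by
  rcases lt_or_ge (x l) 0 with hxl | hxl
  · exact hxl.le.trans (by have := hr l; positivity)
  have hmjl : 1 ≤ mjl dd m pIdx j l := by
    unfold mjl; split_ifs
    exacts [le_rfl, hm _ (hp l).1]
  have hω2 : 2 ≤ mjl dd m pIdx j l * ω l :=
    two_le_of_even_of_pos (hω l).1 (hω l).2 |>.trans (Nat.le_mul_of_pos_left _ hmjl)
  have hcast : (mjl dd m pIdx j l : ℝ) * ω l - 1 = (mjl dd m pIdx j l * ω l - 1 : ℕ) := by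
    rw [Nat.cast_sub (by omega), Nat.cast_mul, Nat.cast_one]
  rw [hcast]
  refine le_mul_rpow_inv_of_pow_le hxl (hr l) hC1 (by omega) ?_
  refine le_of_mul_le_mul_left ?_ (by positivity : 0 < c ^ (W * M))
  calc c ^ (W * M) * x l ^ (mjl dd m pIdx j l * ω l - 1)
      ≤ gradFfun dd dp m ω pIdx x l := mul_pow_le_gradFfun hp hm hω hM hW hc0.le hc1 hcj hxl
    _ = ‖gradFfun dd dp m ω pIdx x‖ * r l := hg l
    _ ≤ √dd * (M * W) * r l := by
        gcongr
        · exact hr l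
        · exact norm_gradFfun_le hp hm hω hx.le hM hW
    _ ≤ c ^ (W * M) * C * r l := by gcongr; exact hr l
    _ = c ^ (W * M) * (C * r l) := mul_assoc _ _ _

end BlockDomain

theorem normal_point_coordinate_bounds_general
    (dd nn : ℕ) (dp m : ℕ → ℕ) (ω : Fin dd → ℕ) (pIdx : Fin dd → ℕ)
    (hmono : ∀ p < nn, dp p < dp (p + 1)) (hm : ∀ p < nn, 1 ≤ m p)
    (hω : ∀ l, Even (ω l) ∧ 0 < ω l)
    (hp : ∀ i : Fin dd, pIdx i < nn ∧ dp (pIdx i) ≤ (i : ℕ) ∧ (i : ℕ) < dp (pIdx i + 1))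
    (ε₀ : ℝ) (hε₀ : 0 < ε₀) (hε₀' : ε₀ ≤ 1) (j : Fin dd) :
    ∃ c C : ℝ, 0 < c ∧ c ≤ C ∧
      ∀ ξ : EuclideanSpace ℝ (Fin dd), ξ ≠ 0 → (∀ l, 0 ≤ ξ l) → ε₀ * ‖ξ‖ ≤ ξ j →
        ∀ a : EuclideanSpace ℝ (Fin dd), a ∈ frontier (Dset dd nn dp m ω) →
          ‖gradient (Ffun dd nn dp m ω) a‖⁻¹ • gradient (Ffun dd nn dp m ω) a =
            ‖ξ‖⁻¹ • ξ →
          c ≤ a j ∧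
          (∀ l : Fin dd, l ≠ j →
            a l ≤ C * (ξ l / ‖ξ‖) ^ (((mjl dd m pIdx j l : ℝ) * (ω l : ℝ) - 1)⁻¹)) ∧
          (∀ l : Fin dd, l ≠ j → pIdx l = pIdx j → 0 < ξ l →
            c * (ξ l / ‖ξ‖) ^ (((ω l : ℝ) - 1)⁻¹) ≤ a l ∧
              a l ≤ C * (ξ l / ‖ξ‖) ^ (((ω l : ℝ) - 1)⁻¹)) := by
  set M := (Finset.range nn).sup m
  set W := Finset.univ.sup ω
  have hM : ∀ p < nn, m p ≤ M := fun p hpn => Finset.le_sup (Finset.mem_range.2 hpn)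
  have hW : ∀ l, ω l ≤ W := fun l => Finset.le_sup (Finset.mem_univ l)
  set K : ℝ := √dd * (M * W)
  have hK : 1 ≤ K := one_le_sqrt_mul hp hm hω hM hW j
  set c := ε₀ / K
  have hc0 : 0 < c := div_pos hε₀ (zero_lt_one.trans_le hK)
  have hc1 : c ≤ 1 := (div_le_self hε₀.le hK).trans hε₀'
  have hcK : c * K = ε₀ := div_mul_cancel₀ _ (zero_lt_one.trans_le hK).ne'
  have hκ : 0 < c ^ (W * M) := by positivity
  set C := K / c ^ (W * M)
  have hC1 : 1 ≤ C := (one_le_div hκ).2 ((pow_le_one₀ hc0.le hc1).trans hK)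
  refine ⟨c, C, hc0, hc1.trans hC1, fun ξ hξ hξ0 hξj a ha hnormal => ?_⟩
  rw [(hasGradientAt_Ffun hmono hp a).gradient] at hnormal
  have hx := Ffun_eq_one_of_mem_frontier ha
  have hg := EuclideanSpace.apply_eq_norm_mul_of_inv_norm_smul_eq hnormal
  have hξn : 0 < ‖ξ‖ := norm_pos_iff.2 hξ
  have hcj : c ≤ a j := le_coord_of_normal hmono hp hm hω hM hW hx hg hc0
    (by rw [hcK, le_div_iff₀ hξn]; exact hξj)
  have hii := coord_le_of_normal hp hm hω hM hW hx hg (fun i => div_nonneg (hξ0 i) hξn.le)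
    hc0 hc1 hcj (mul_div_cancel₀ K hκ.ne').ge hC1
  refine ⟨hcj, fun l _ => hii l, fun l _ hpl hξl => ⟨?_, by simpa [mjl, hpl] using hii l⟩⟩
  exact mul_rpow_le_coord_of_normal hmono hp hm hω hM hW hx hg hc0.le (hcK ▸ hε₀')
    (div_pos hξl hξn)

theorem normal_point_coordinate_bounds
    (dd nn : ℕ) (dp m : ℕ → ℕ) (ω : Fin dd → ℕ) (pIdx : Fin dd → ℕ)
    (hd : 3 ≤ dd) (hn : 1 ≤ nn) (hdp0 : dp 0 = 0) (hdpn : dp nn = dd)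
    (hmono : ∀ p < nn, dp p < dp (p + 1)) (hm : ∀ p < nn, 1 ≤ m p)
    (hω : ∀ l, Even (ω l) ∧ 0 < ω l)
    (hp : ∀ i : Fin dd, pIdx i < nn ∧ dp (pIdx i) ≤ (i : ℕ) ∧ (i : ℕ) < dp (pIdx i + 1))
    (ε₀ : ℝ) (hε₀ : 0 < ε₀) (hε₀' : ε₀ ≤ 1) (j : Fin dd) :
    ∃ c C : ℝ, 0 < c ∧ c ≤ C ∧
      ∀ ξ : EuclideanSpace ℝ (Fin dd), ξ ≠ 0 → (∀ l, 0 ≤ ξ l) → ε₀ * ‖ξ‖ ≤ ξ j →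
        ∀ a : EuclideanSpace ℝ (Fin dd), a ∈ frontier (Dset dd nn dp m ω) →
          ‖gradient (Ffun dd nn dp m ω) a‖⁻¹ • gradient (Ffun dd nn dp m ω) a =
            ‖ξ‖⁻¹ • ξ →
          c ≤ a j ∧
          (∀ l : Fin dd, l ≠ j →
            a l ≤ C * (ξ l / ‖ξ‖) ^ (((mjl dd m pIdx j l : ℝ) * (ω l : ℝ) - 1)⁻¹)) ∧
          (∀ l : Fin dd, l ≠ j → pIdx l = pIdx j → 0 < ξ l →
            c * (ξ l / ‖ξ‖) ^ (((ω l : ℝ) - 1)⁻¹) ≤ a l ∧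
              a l ≤ C * (ξ l / ‖ξ‖) ^ (((ω l : ℝ) - 1)⁻¹)) :=
  normal_point_coordinate_bounds_general dd nn dp m ω pIdx hmono hm hω hp ε₀ hε₀ hε₀' j
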